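/- Let D be an integral domain with quotient field K, T an overring of D, ⋆ a semistar operation on D and ⋆' a semistar operation on T. If D is a P⋆MD and T is (⋆,⋆')-linked to D, then T is a P⋆'MD. -/
import Mathlib


open Pointwise

/-! Basic framework for semistar operations on an integral domain `D`
with quotient field `K`. Submodules of `K` play the role of the
`D`-submodules of the quotient field. -/

section Generic

variable (R : Type*) (K : Type*) [CommRing R] [Field K] [Algebra R K]

/-- A semistar operation on `R` (with ambient field `K`): a map on the nonzero
`R`-submodules of `K` satisfying (⋆₁), (⋆₂), (⋆₃). The map is total on
`Submodule R K`, but the axioms are only imposed on nonzero submodules. -/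
structure SemistarOp where
  toFun : Submodule R K → Submodule R K
  smul' : ∀ x : K, x ≠ 0 → ∀ E : Submodule R K, E ≠ ⊥ → toFun (x • E) = x • toFun E
  mono' : ∀ E F : Submodule R K, E ≠ ⊥ → F ≠ ⊥ → E ≤ F → toFun E ≤ toFun F
  le_star' : ∀ E : Submodule R K, E ≠ ⊥ → E ≤ toFun E
  idem' : ∀ E : Submodule R K, E ≠ ⊥ → toFun (toFun E) = toFun E

variable {R K}

/-- The `R`-submodule of `K` generated by (the image of) an ideal of `R`. -/
def idealSub (I : Ideal R) : Submodule R K := Submodule.map (Algebra.linearMap R K) I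

/-- The finite-type operation `⋆_f` associated to (the function underlying) a semistar
operation: `E^{⋆_f} = ∪ { F^⋆ : F nonzero finitely generated, F ⊆ E }`. -/
def starF (f : Submodule R K → Submodule R K) (E : Submodule R K) : Submodule R K :=
  sSup {G | ∃ F : Submodule R K, F.FG ∧ F ≠ ⊥ ∧ F ≤ E ∧ G = f F}

/-- `I` is a quasi-⋆-ideal: `I ≠ 0` and `I^⋆ ∩ R = I`. -/
def QuasiIdeal (f : Submodule R K → Submodule R K) (I : Ideal R) : Prop :=
  I ≠ ⊥ ∧ Submodule.comap (Algebra.linearMap R K) (f (idealSub I)) = I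

/-- `I` is a quasi-⋆-prime: a prime quasi-⋆-ideal. -/
def QuasiPrime (f : Submodule R K → Submodule R K) (I : Ideal R) : Prop :=
  QuasiIdeal f I ∧ I.IsPrime

/-- `I` is a quasi-⋆-maximal: maximal among proper quasi-⋆-ideals. -/
def QuasiMax (f : Submodule R K → Submodule R K) (I : Ideal R) : Prop :=
  QuasiIdeal f I ∧ I ≠ ⊤ ∧ ∀ J : Ideal R, QuasiIdeal f J → J ≠ ⊤ → I ≤ J → I = J

/-- The localization `E·R_Q` of a submodule `E` of `K` at (the complement of) `Q`:
for prime `Q` this is `{x ∈ K : s·x ∈ E for some s ∉ Q}`. -/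
def locSub (Q : Ideal R) (E : Submodule R K) : Submodule R K :=
  Submodule.span R {x : K | ∃ s : R, s ∉ Q ∧ algebraMap R K s * x ∈ E}

/-- The spectral semistar operation `⋆̃` associated to `⋆`:
`E^{⋆̃} = ∩ { E R_Q : Q quasi-⋆_f-maximal }` (equal to `K` if there are none). -/
def tildeOp (f : Submodule R K → Submodule R K) (E : Submodule R K) : Submodule R K :=
  ⨅ (Q : Ideal R) (_ : QuasiMax (starF f) Q), locSub Q E

/-- The `v`-operation `E ↦ (R :_K (R :_K E))`. -/
def vOp (E : Submodule R K) : Submodule R K := 1 / (1 / E)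

/-- The `t`-operation: the finite-type operation associated to `v`. -/
def tOp : Submodule R K → Submodule R K := starF (vOp (R := R) (K := K))

/-- `R` is a Prüfer ⋆-multiplication domain: every nonzero finitely generated ideal `F`
is ⋆_f-invertible, i.e. `(F·(R :_K F))^{⋆_f} = R^⋆`. -/
def PSMD (f : Submodule R K → Submodule R K) : Prop :=
  ∀ F : Ideal R, F ≠ ⊥ → F.FG →
    starF f (idealSub F * ((1 : Submodule R K) / idealSub F)) = f 1

/-- The content ideal of a polynomial: the ideal generated by its coefficients. -/
def contentI (h : Polynomial R) : Ideal R := Ideal.span (Set.range h.coeff)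

/-- The Nagata ring `Na(R,⋆) = R[X]_{N(⋆)}`, realized as the subset
`{g/h : g, h ∈ R[X], h ≠ 0, c(h)^⋆ = R^⋆}` of the field `K(X)` of rational functions. -/
def NaSet (f : Submodule R K → Submodule R K) : Set (RatFunc K) :=
  {x | ∃ g h : Polynomial R, h ≠ 0 ∧ f (idealSub (contentI h)) = f 1 ∧
    x * algebraMap (Polynomial K) (RatFunc K) (h.map (algebraMap R K)) =
      algebraMap (Polynomial K) (RatFunc K) (g.map (algebraMap R K))}

/-- The Nagata ring as a subring of `K(X)` (the set `NaSet` is multiplicatively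
saturated, so it coincides with the subring it generates). -/
noncomputable def NaSub (f : Submodule R K → Submodule R K) : Subring (RatFunc K) :=
  Subring.closure (NaSet f)

/-- A subset `S` of `K` is integrally closed (in `K`) if every element of `K` which is a root
of a monic polynomial with coefficients in `S` lies in `S`. -/
def IntClosedSet (S : Set K) : Prop :=
  ∀ x : K, (∃ p : Polynomial K, p.Monic ∧ (∀ n, p.coeff n ∈ S) ∧ p.eval x = 0) → x ∈ S

/-- A subset `S` of `K` is seminormal if `x² ∈ S` and `x³ ∈ S` imply `x ∈ S`. -/
def SeminormalSet (S : Set K) : Prop := ∀ x : K, x ^ 2 ∈ S → x ^ 3 ∈ S → x ∈ S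

/-- `T` is `(f,g)`-linked to `T` (case `D = T` of linkedness). -/
def LinkedSelf (f g : Submodule R K → Submodule R K) : Prop :=
  ∀ G : Ideal R, G ≠ ⊥ → G.FG → f (idealSub G) = f 1 → g (idealSub G) = g 1

end Generic

section Overring

variable {D : Type*} {K : Type*} [CommRing D] [Field K] [Algebra D K]

/-- The `T`-submodule `E·T` of `K` generated by a `D`-submodule `E` of `K`. -/
def extT (T : Subalgebra D K) (E : Submodule D K) : Submodule ↥T K :=
  Submodule.span ↥T (E : Set K)

/-- `T` is `(⋆,⋆')`-linked to `D`: for every nonzero finitely generated integral ideal `F`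
of `D`, `F^⋆ = D^⋆` implies `(FT)^{⋆'} = T^{⋆'}`. -/
def LinkedF (f : Submodule D K → Submodule D K) (T : Subalgebra D K)
    (g : Submodule ↥T K → Submodule ↥T K) : Prop :=
  ∀ F : Ideal D, F ≠ ⊥ → F.FG → f (idealSub F) = f 1 → g (extT T (idealSub F)) = g 1

/-- `T` is `t`-linked to `(D,⋆)`: `T` is `(⋆, t_T)`-linked to `D`. -/
def TLinked (f : Submodule D K → Submodule D K) (T : Subalgebra D K) : Prop :=
  LinkedF f T (tOp (R := ↥T) (K := K))

/-- The semistar operation `ℓ_{⋆,T}` on `T`: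
`E^ℓ = ∩ { E T_{D∖P} : P quasi-⋆_f-prime of D }` (equal to `K` if there are none). -/
def ellOp (f : Submodule D K → Submodule D K) (T : Subalgebra D K)
    (E : Submodule ↥T K) : Submodule ↥T K :=
  ⨅ (P : Ideal D) (_ : QuasiPrime (starF f) P),
    Submodule.span ↥T {x : K | ∃ r : D, r ∉ P ∧ algebraMap D K r * x ∈ E}

/-- The localization `D_P` of `D` at a prime `P`, as a subalgebra of `K`. -/
def Dloc (P : Ideal D) : Subalgebra D K :=
  Algebra.adjoin D {x : K | ∃ r : D, r ∉ P ∧ algebraMap D K r * x ∈ (⊥ : Subalgebra D K)}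

/-- The localization `T_{D∖P}` of an overring `T` at the multiplicative set `D∖P`,
as a subalgebra of `K`. -/
def TlocD (T : Subalgebra D K) (P : Ideal D) : Subalgebra D K :=
  Algebra.adjoin D {x : K | ∃ r : D, r ∉ P ∧ algebraMap D K r * x ∈ T}

/-- The localization `T_Q` of an overring `T` at a prime `Q` of `T`,
as a subalgebra of `K`. -/
def TlocQ (T : Subalgebra D K) (Q : Ideal ↥T) : Subalgebra D K :=
  Algebra.adjoin D {x : K | ∃ t : ↥T, t ∉ Q ∧ (t : K) * x ∈ T}

/-- `T` is `(⋆,⋆')`-flat over `D`: `T` is `(⋆,⋆')`-linked to `D` and `D_{Q∩D} = T_Q`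
for every quasi-⋆'_f-prime `Q` of `T`. -/
def FlatF (f : Submodule D K → Submodule D K) (T : Subalgebra D K)
    (g : Submodule ↥T K → Submodule ↥T K) : Prop :=
  LinkedF f T g ∧
    ∀ Q : Ideal ↥T, QuasiPrime (starF g) Q →
      Dloc (Q.comap (algebraMap D ↥T)) = TlocQ T Q

/-- `B` is a flat `A`-module (for subalgebras `A ⊆ B` of `K`, with the module structure
coming from the inclusion). -/
def FlatPair (A B : Subalgebra D K) : Prop :=
  ∃ h : A ≤ B, @Module.Flat ↥A ↥B _ _ ((Subalgebra.inclusion h).toRingHom.toModule)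

/-- `B` is a flat `A`-module, for subrings `A ⊆ B` of a commutative ring. -/
def FlatSubring {L : Type*} [CommRing L] (A B : Subring L) : Prop :=
  ∃ h : A ≤ B, @Module.Flat ↥A ↥B _ _ ((Subring.inclusion h).toModule)

end Overring

section Lemmas
variable {R K : Type*} [CommRing R] [Field K] [Algebra R K]

lemma my_one_ne_bot : (1 : Submodule R K) ≠ ⊥ := by
  intro h
  have h1 : (1:K) ∈ (1 : Submodule R K) := Submodule.one_le.mp le_rfl
  rw [h, Submodule.mem_bot] at h1
  exact one_ne_zero h1

lemma starF_le_of_le_one (s : SemistarOp R K) {E : Submodule R K} (hE : E ≤ 1) :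
    starF s.toFun E ≤ s.toFun 1 := by
  apply sSup_le
  rintro G ⟨F, hFfg, hF0, hFE, rfl⟩
  exact s.mono' F 1 hF0 my_one_ne_bot (hFE.trans hE)

lemma idealSub_le_one (F : Ideal R) : (idealSub F : Submodule R K) ≤ 1 := by
  rw [Submodule.one_eq_range]
  rintro x ⟨a, _, rfl⟩
  exact ⟨a, rfl⟩

lemma exists_starF_witness (s : SemistarOp R K) (F : Ideal R) (hF0 : F ≠ ⊥) (hFfg : F.FG)
    (hinv : starF s.toFun (idealSub F * ((1 : Submodule R K) / idealSub F)) = s.toFun 1)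
    (hinj : Function.Injective (Algebra.linearMap R K)) :
    ∃ J : Ideal R, J ≠ ⊥ ∧ J.FG ∧
      (idealSub J : Submodule R K) ≤ idealSub F * ((1 : Submodule R K) / idealSub F) ∧
      s.toFun (idealSub J) = s.toFun 1 := by
  set E := idealSub F * ((1 : Submodule R K) / idealSub F) with hEdef
  have hE1 : E ≤ 1 := Submodule.mul_le.mpr fun x hx y hy => by
    rw [mul_comm]
    exact Submodule.mem_div_iff_forall_mul_mem.mp hy x hx
  have hFE : (idealSub F : Submodule R K) ≤ E := by
    intro x hx
    have h1 : (1:K) ∈ (1 : Submodule R K) / idealSub F :=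
      Submodule.mem_div_iff_forall_mul_mem.mpr fun y hy => by simpa using idealSub_le_one F hy
    simpa using Submodule.mul_mem_mul hx h1
  have hFsub0 : (idealSub F : Submodule R K) ≠ ⊥ := by
    obtain ⟨a, haF, ha0⟩ := (Submodule.ne_bot_iff _).mp hF0
    refine (Submodule.ne_bot_iff _).mpr ⟨Algebra.linearMap R K a, ⟨a, haF, rfl⟩,
      fun h => ha0 (hinj (by rw [h, map_zero]))⟩
  set S := {G | ∃ F' : Submodule R K, F'.FG ∧ F' ≠ ⊥ ∧ F' ≤ E ∧ G = s.toFun F'} with hSdef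
  have hne : S.Nonempty := ⟨s.toFun (idealSub F), idealSub F,
    Submodule.FG.map _ hFfg, hFsub0, hFE, rfl⟩
  have hdir : DirectedOn (· ≤ ·) S := by
    rintro _ ⟨A, hAfg, hA0, hAE, rfl⟩ _ ⟨B, hBfg, hB0, hBE, rfl⟩
    have hAB0 : A ⊔ B ≠ ⊥ := fun h => hA0 (le_bot_iff.mp (h ▸ le_sup_left))
    exact ⟨s.toFun (A ⊔ B), ⟨A ⊔ B, hAfg.sup hBfg, hAB0, sup_le hAE hBE, rfl⟩,
      s.mono' A (A ⊔ B) hA0 hAB0 le_sup_left, s.mono' B (A ⊔ B) hB0 hAB0 le_sup_right⟩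
  have h1mem : (1:K) ∈ starF s.toFun E := by
    rw [hinv]
    exact s.le_star' 1 my_one_ne_bot (Submodule.one_le.mp le_rfl)
  obtain ⟨_, ⟨H, hHfg, hH0, hHE, rfl⟩, h1H⟩ :=
    (Submodule.mem_sSup_of_directed hne hdir).mp h1mem
  have hmap : Submodule.map (Algebra.linearMap R K) (Submodule.comap (Algebra.linearMap R K) H) = H :=
    Submodule.map_comap_eq_self (by rw [← Submodule.one_eq_range]; exact hHE.trans hE1)
  have hIJ : (idealSub (Submodule.comap (Algebra.linearMap R K) H) : Submodule R K) = H := hmap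
  refine ⟨Submodule.comap (Algebra.linearMap R K) H, ?_, ?_, ?_, ?_⟩
  · exact fun h => hH0 (by rw [← hmap, h, Submodule.map_bot])
  · exact Submodule.fg_of_fg_map_injective _ hinj (by rw [hmap]; exact hHfg)
  · rw [hIJ]; exact hHE
  · rw [hIJ]
    have h1le : (1 : Submodule R K) ≤ s.toFun H := Submodule.one_le.mpr h1H
    have hsH0 : s.toFun H ≠ ⊥ :=
      fun h => hH0 (le_bot_iff.mp (h ▸ s.le_star' H hH0))
    refine le_antisymm (s.mono' H 1 hH0 my_one_ne_bot (hHE.trans hE1)) ?_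
    calc s.toFun 1 ≤ s.toFun (s.toFun H) := s.mono' 1 (s.toFun H) my_one_ne_bot hsH0 h1le
      _ = s.toFun H := s.idem' H hH0

end Lemmas

/-- **Corollary 5.4.** If `D` is a P⋆MD and `T` is `(⋆,⋆')`-linked to `D`, then `T` is a
P⋆'MD. -/
theorem psmd_of_linked_of_psmd
    {D K : Type*} [CommRing D] [IsDomain D] [Field K] [Algebra D K] [IsFractionRing D K]
    (T : Subalgebra D K) (s : SemistarOp D K) (s' : SemistarOp ↥T K)
    (hD : PSMD s.toFun) (hlinked : LinkedF s.toFun T s'.toFun) :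
    PSMD s'.toFun := by

  intro G hG0 hGfg
  classical
  have hinj : Function.Injective (Algebra.linearMap D K) :=
    fun a b h => IsFractionRing.injective D K h
  obtain ⟨S, hS⟩ := hGfg
  have hex : ∃ t ∈ S, (t : K) ≠ 0 := by
    by_contra hall
    push_neg at hall
    apply hG0
    rw [← hS, eq_bot_iff, Ideal.span_le]
    intro t ht
    have h0 : (t : K) = 0 := hall t ht
    have : t = 0 := Subtype.ext (by simpa using h0)
    simp [this, Submodule.mem_bot]
  obtain ⟨t0, ht0S, ht00⟩ := hex
  obtain ⟨b, hb⟩ := IsLocalization.exist_integer_multiples (nonZeroDivisors D) S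
    (fun t : ↥T => (t : K))
  set d : D := (b : D) with hd
  have hd0 : d ≠ 0 := nonZeroDivisors.coe_ne_zero b
  set δ : K := algebraMap D K d with hδ
  have hδ0 : δ ≠ 0 :=
    (map_ne_zero_iff _ (IsFractionRing.injective D K)).mpr hd0
  set Sd : Set K := (fun t : ↥T => δ * (t : K)) '' ↑S with hSd
  set M : Submodule D K := Submodule.span D Sd with hM
  have hδtM : ∀ t ∈ S, δ * (t : K) ∈ M := by
    intro t htS
    exact Submodule.subset_span ⟨t, Finset.mem_coe.mpr htS, rfl⟩
  have hSd1 : Sd ⊆ ↑(1 : Submodule D K) := by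
    rintro _ ⟨t, ht, rfl⟩
    obtain ⟨a, ha⟩ := hb t (Finset.mem_coe.mp ht)
    rw [SetLike.mem_coe, Submodule.one_eq_range]
    exact ⟨a, by rw [Algebra.linearMap_apply, ha, Algebra.smul_def]⟩
  have hM1 : M ≤ 1 := Submodule.span_le.mpr hSd1
  set F : Ideal D := Submodule.comap (Algebra.linearMap D K) M with hF
  have hFmap : (idealSub F : Submodule D K) = M :=
    Submodule.map_comap_eq_self (by rw [← Submodule.one_eq_range]; exact hM1)
  have hFfg : F.FG := Submodule.fg_of_fg_map_injective _ hinj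
    (by rw [show Submodule.map (Algebra.linearMap D K) F = M from hFmap]
        exact Submodule.fg_span (Set.Finite.image _ S.finite_toSet))
  have hδt0M : δ * (t0 : K) ∈ M := hδtM t0 ht0S
  have hF0 : F ≠ ⊥ := by
    obtain ⟨a, ha⟩ : ∃ a, Algebra.linearMap D K a = δ * (t0 : K) := by
      have h := hM1 hδt0M
      rw [Submodule.one_eq_range] at h
      exact h
    refine (Submodule.ne_bot_iff F).mpr ⟨a, ?_, ?_⟩
    · show Algebra.linearMap D K a ∈ M
      rw [ha]; exact hδt0M
    · rintro rfl
      exact (mul_ne_zero hδ0 ht00) (by rw [← ha, map_zero])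
  obtain ⟨J, hJ0, hJfg, hJle, hJstar⟩ :=
    exists_starF_witness s F hF0 hFfg (hD F hF0 hFfg) hinj
  have hGsub : (idealSub G : Submodule ↥T K) =
      Submodule.span ↥T ((fun t : ↥T => (t : K)) '' ↑S) := by
    rw [idealSub, ← hS, Ideal.span, Submodule.map_span]
    rfl
  have key : (idealSub F * ((1 : Submodule D K) / idealSub F) : Submodule D K) ≤
      (idealSub G * ((1 : Submodule ↥T K) / idealSub G)).restrictScalars D := by
    rw [hFmap]
    refine Submodule.mul_le.mpr fun x hx y hy => ?_
    have hxg : δ⁻¹ * x ∈ (idealSub G : Submodule ↥T K) := by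
      have hle : M ≤ Submodule.comap (LinearMap.mulLeft D δ⁻¹)
          ((idealSub G).restrictScalars D) := by
        rw [hM]
        refine Submodule.span_le.mpr ?_
        rintro _ ⟨t, htS, rfl⟩
        simp only [Submodule.mem_comap, LinearMap.mulLeft_apply,
          Submodule.restrictScalars_mem, SetLike.mem_coe]
        rw [← mul_assoc, inv_mul_cancel₀ hδ0, one_mul]
        rw [hGsub]
        exact Submodule.subset_span ⟨t, htS, rfl⟩
      simpa using hle hx
    have hδy : δ * y ∈ (1 : Submodule ↥T K) / idealSub G := by
      rw [Submodule.mem_div_iff_forall_mul_mem]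
      intro g hg
      have hle : (idealSub G : Submodule ↥T K) ≤
          Submodule.comap (LinearMap.mulLeft ↥T (δ * y)) (1 : Submodule ↥T K) := by
        rw [hGsub]
        refine Submodule.span_le.mpr ?_
        rintro _ ⟨t, htS, rfl⟩
        simp only [SetLike.mem_coe, Submodule.mem_comap, LinearMap.mulLeft_apply]
        have hy1 : y * (δ * (t : K)) ∈ (1 : Submodule D K) :=
          Submodule.mem_div_iff_forall_mul_mem.mp hy _ (hδtM t htS)
        rw [Submodule.one_eq_range] at hy1 ⊢
        obtain ⟨a, ha⟩ := hy1
        refine ⟨algebraMap D ↥T a, ?_⟩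
        rw [Algebra.linearMap_apply, ← IsScalarTower.algebraMap_apply,
          ← Algebra.linearMap_apply, ha]
        ring
      exact hle hg
    have hxy : x * y = (δ⁻¹ * x) * (δ * y) := by
      rw [mul_mul_mul_comm, inv_mul_cancel₀ hδ0, one_mul]
    rw [Submodule.restrictScalars_mem, hxy]
    exact Submodule.mul_mem_mul hxg hδy
  obtain ⟨SJ, hSJ⟩ : (idealSub J : Submodule D K).FG := Submodule.FG.map _ hJfg
  have hJT : extT T (idealSub J) = Submodule.span ↥T ↑SJ := by
    rw [extT, ← hSJ, Submodule.span_span_of_tower]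
  have hJTfg : (extT T (idealSub J)).FG := by
    rw [hJT]; exact Submodule.fg_span SJ.finite_toSet
  have hJT0 : extT T (idealSub J) ≠ ⊥ := by
    obtain ⟨a, haJ, ha0⟩ := (Submodule.ne_bot_iff J).mp hJ0
    have hmem : Algebra.linearMap D K a ∈ (idealSub J : Submodule D K) := ⟨a, haJ, rfl⟩
    refine (Submodule.ne_bot_iff _).mpr ⟨Algebra.linearMap D K a,
      Submodule.subset_span hmem, fun h => ha0 (hinj (by rw [h, map_zero]))⟩
  have hJTle : extT T (idealSub J) ≤ idealSub G * ((1 : Submodule ↥T K) / idealSub G) := by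
    refine Submodule.span_le.mpr fun z hz => ?_
    exact key (hJle hz)
  have hlink := hlinked J hJ0 hJfg hJstar
  refine le_antisymm (starF_le_of_le_one s' ?_) ?_
  · exact Submodule.mul_le.mpr fun g hg y hy => by
      rw [mul_comm]
      exact Submodule.mem_div_iff_forall_mul_mem.mp hy g hg
  · rw [← hlink]
    exact le_sSup ⟨extT T (idealSub J), hJTfg, hJT0, hJTle, rfl⟩
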